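/- Let a and b be coprime integers with 0 < a < b, β ∈ ℂ, and ε ∈ ℂ with ε ≠ 0. The ℂ-vector space {f ∈ ℂ[[t₁,x₂]] : P f = 0 and E_p f = 0} of formal power series solutions of the hypergeometric system at the point p = (ε,0) has dimension a. -/

import Mathlib

noncomputable section

abbrev M2 : Type := MvPowerSeries (Fin 2) ℂ

/-- Coefficient `f_{(i,j)}` of a formal power series `f ∈ ℂ[[x₁,x₂]]`. -/
def co (f : M2) (i j : ℕ) : ℂ :=
  MvPowerSeries.coeff (R := ℂ) (Finsupp.single (0 : Fin 2) i + Finsupp.single (1 : Fin 2) j) f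

/-- A coefficient family `F` is Gevrey of order `s` along `x₂ = 0`:
`|F i j| ≤ C·R^(i+j)·(j!)^(s-1)` for some `C, R > 0`. -/
def GevreyFn (s : ℝ) (F : ℕ → ℕ → ℂ) : Prop :=
  ∃ C R : ℝ, 0 < C ∧ 0 < R ∧
    ∀ i j : ℕ, ‖F i j‖ ≤ C * R ^ (i + j) * (j.factorial : ℝ) ^ (s - 1)

/-- A coefficient family is convergent iff it is Gevrey of order `1`, i.e.
`|F i j| ≤ C·R^(i+j)` for some `C, R > 0`. -/
def ConvFn (F : ℕ → ℕ → ℂ) : Prop := GevreyFn 1 F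

/-- Coefficients of `P f` where `P = ∂₁^b - ∂₂^a`:
`(P f)_{(i,j)} = ((i+b)!/i!)·f_{(i+b,j)} - ((j+a)!/j!)·f_{(i,j+a)}`. -/
def Pco (a b : ℕ) (f : M2) (i j : ℕ) : ℂ :=
  (((i + b).factorial / i.factorial : ℕ) : ℂ) * co f (i + b) j
    - (((j + a).factorial / j.factorial : ℕ) : ℂ) * co f i (j + a)

/-- Coefficients of `E f` where `E = a·x₁∂₁ + b·x₂∂₂ - β`:
`(E f)_{(i,j)} = (a·i + b·j - β)·f_{(i,j)}`. -/
def Eco (a b : ℕ) (β : ℂ) (f : M2) (i j : ℕ) : ℂ :=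
  (((a * i + b * j : ℕ) : ℂ) - β) * co f i j

/-- Coefficients of `E_p f` where `E_p = a·(t₁+ε)∂₁ + b·x₂∂₂ - β`:
`(E_p f)_{(i,j)} = (a·i + b·j - β)·f_{(i,j)} + a·ε·(i+1)·f_{(i+1,j)}`. -/
def Epco (a b : ℕ) (β ε : ℂ) (f : M2) (i j : ℕ) : ℂ :=
  (((a * i + b * j : ℕ) : ℂ) - β) * co f i j + (a : ℂ) * ε * ((i : ℂ) + 1) * co f (i + 1) j

lemma co_add (f g : M2) (i j : ℕ) : co (f + g) i j = co f i j + co g i j := by simp [co]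

lemma co_smul (c : ℂ) (f : M2) (i j : ℕ) : co (c • f) i j = c * co f i j := by simp [co]

lemma co_zero (i j : ℕ) : co (0 : M2) i j = 0 := by simp [co]

lemma gevreyFn_zero {s : ℝ} : GevreyFn s fun _ _ => (0 : ℂ) :=
  ⟨1, 1, one_pos, one_pos, by intro i j; simp; positivity⟩

lemma gevreyFn_add {s : ℝ} {F G : ℕ → ℕ → ℂ} (hF : GevreyFn s F) (hG : GevreyFn s G) :
    GevreyFn s fun i j => F i j + G i j := by
  obtain ⟨C, R, hC, hR, h⟩ := hF
  obtain ⟨C', R', hC', hR', h'⟩ := hG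
  refine ⟨C + C', max R R', by positivity, lt_of_lt_of_le hR (le_max_left _ _), fun i j => ?_⟩
  have h1 := h i j
  have h2 := h' i j
  have hRm : R ^ (i + j) ≤ (max R R') ^ (i + j) := pow_le_pow_left₀ hR.le (le_max_left _ _) _
  have hRm' : R' ^ (i + j) ≤ (max R R') ^ (i + j) := pow_le_pow_left₀ hR'.le (le_max_right _ _) _
  have hfac : (0 : ℝ) ≤ (j.factorial : ℝ) ^ (s - 1) := by positivity
  calc ‖F i j + G i j‖ ≤ ‖F i j‖ + ‖G i j‖ :=
        norm_add_le _ _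
    _ ≤ C * R ^ (i + j) * (j.factorial : ℝ) ^ (s - 1)
        + C' * R' ^ (i + j) * (j.factorial : ℝ) ^ (s - 1) := add_le_add h1 h2
    _ ≤ C * (max R R') ^ (i + j) * (j.factorial : ℝ) ^ (s - 1)
        + C' * (max R R') ^ (i + j) * (j.factorial : ℝ) ^ (s - 1) := by gcongr
    _ = (C + C') * (max R R') ^ (i + j) * (j.factorial : ℝ) ^ (s - 1) := by ring

lemma gevreyFn_smul {s : ℝ} (c : ℂ) {F : ℕ → ℕ → ℂ} (hF : GevreyFn s F) :
    GevreyFn s fun i j => c * F i j := by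
  obtain ⟨C, R, hC, hR, h⟩ := hF
  refine ⟨(‖c‖ + 1) * C, R, by positivity, hR, fun i j => ?_⟩
  have h1 := h i j
  calc ‖c * F i j‖ = ‖c‖ * ‖F i j‖ := by simp [norm_mul]
    _ ≤ (‖c‖ + 1) * (C * R ^ (i + j) * (j.factorial : ℝ) ^ (s - 1)) := by
        apply mul_le_mul (by linarith) h1 (norm_nonneg _) (by positivity)
    _ = (‖c‖ + 1) * C * R ^ (i + j) * (j.factorial : ℝ) ^ (s - 1) := by ring

lemma gevreyFn_co_add {s : ℝ} {f g : M2} (hf : GevreyFn s (co f)) (hg : GevreyFn s (co g)) :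
    GevreyFn s (co (f + g)) := by
  have : co (f + g) = fun i j => co f i j + co g i j := by funext i j; exact co_add f g i j
  rw [this]; exact gevreyFn_add hf hg

lemma gevreyFn_co_smul {s : ℝ} (c : ℂ) {f : M2} (hf : GevreyFn s (co f)) :
    GevreyFn s (co (c • f)) := by
  have : co (c • f) = fun i j => c * co f i j := by funext i j; exact co_smul c f i j
  rw [this]; exact gevreyFn_smul c hf

lemma gevreyFn_co_zero {s : ℝ} : GevreyFn s (co (0 : M2)) := by
  have : co (0 : M2) = fun _ _ => (0 : ℂ) := by funext i j; exact co_zero i j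
  rw [this]; exact gevreyFn_zero

lemma pco_add (a b : ℕ) (f g : M2) (i j : ℕ) :
    Pco a b (f + g) i j = Pco a b f i j + Pco a b g i j := by
  simp only [Pco, co_add]; ring

lemma pco_smul (a b : ℕ) (c : ℂ) (f : M2) (i j : ℕ) :
    Pco a b (c • f) i j = c * Pco a b f i j := by
  simp only [Pco, co_smul]; ring

lemma pco_zero (a b : ℕ) (i j : ℕ) : Pco a b (0 : M2) i j = 0 := by
  simp [Pco, co_zero]

lemma eco_add (a b : ℕ) (β : ℂ) (f g : M2) (i j : ℕ) :
    Eco a b β (f + g) i j = Eco a b β f i j + Eco a b β g i j := by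
  simp only [Eco, co_add]; ring

lemma eco_smul (a b : ℕ) (β : ℂ) (c : ℂ) (f : M2) (i j : ℕ) :
    Eco a b β (c • f) i j = c * Eco a b β f i j := by
  simp only [Eco, co_smul]; ring

lemma eco_zero (a b : ℕ) (β : ℂ) (i j : ℕ) : Eco a b β (0 : M2) i j = 0 := by
  simp [Eco, co_zero]

lemma epco_add (a b : ℕ) (β ε : ℂ) (f g : M2) (i j : ℕ) :
    Epco a b β ε (f + g) i j = Epco a b β ε f i j + Epco a b β ε g i j := by
  simp only [Epco, co_add]; ring

lemma epco_smul (a b : ℕ) (β ε : ℂ) (c : ℂ) (f : M2) (i j : ℕ) :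
    Epco a b β ε (c • f) i j = c * Epco a b β ε f i j := by
  simp only [Epco, co_smul]; ring

lemma epco_zero (a b : ℕ) (β ε : ℂ) (i j : ℕ) : Epco a b β ε (0 : M2) i j = 0 := by
  simp [Epco, co_zero]

/-- The space of formal power series solutions of the hypergeometric system at `p = (ε,0)`,
`ε ≠ 0`: series `f ∈ ℂ[[t₁,x₂]]` with `P f = 0` and `E_p f = 0`. -/
def SolP (a b : ℕ) (β ε : ℂ) : Submodule ℂ M2 where
  carrier := {f | (∀ i j : ℕ, Pco a b f i j = 0) ∧ ∀ i j : ℕ, Epco a b β ε f i j = 0}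
  add_mem' := by
    rintro f g ⟨hf1, hf2⟩ ⟨hg1, hg2⟩
    exact ⟨fun i j => by rw [pco_add, hf1 i j, hg1 i j, add_zero],
      fun i j => by rw [epco_add, hf2 i j, hg2 i j, add_zero]⟩
  zero_mem' := ⟨fun i j => pco_zero a b i j, fun i j => epco_zero a b β ε i j⟩
  smul_mem' := by
    rintro c f ⟨hf1, hf2⟩
    exact ⟨fun i j => by rw [pco_smul, hf1 i j, mul_zero],
      fun i j => by rw [epco_smul, hf2 i j, mul_zero]⟩

/-!
`E_p f = 0` is a first-order recurrence in `i` with nonvanishing leading coefficient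
`a ε (i + 1)`, so `f_{(i,j)} = c_{i,j} f_{(0,j)}` for explicit `c_{i,j}`. Substituted into
`P f = 0`, the identity `a (b + k) + b j = a k + b (j + a)` makes every equation a multiple of
the one at `i = 0`, which reads `f_{(0,j+a)} = λ_j f_{(0,j)}`. Hence solutions correspond to
solutions of a recurrence of step `a`, and these are freely determined by their first `a` values.
-/

open Finset
open scoped Nat

section StepRecurrence

variable (K : Type*) [CommRing K] (a : ℕ) (μ : ℕ → K)

def stepRecurrence : Submodule K (ℕ → K) where
  carrier := {g | ∀ j, g (j + a) = μ j * g j}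
  add_mem' := by
    intro g h hg hh j
    simp only [Pi.add_apply, hg j, hh j, mul_add]
  zero_mem' := by simp
  smul_mem' := by
    intro c g hg j
    simp only [Pi.smul_apply, smul_eq_mul, hg j]
    ring

variable {K a μ}

theorem stepRecurrence.apply_add_mul {g : ℕ → K} (hg : g ∈ stepRecurrence K a μ)
    (r q : ℕ) : g (r + a * q) = (∏ m ∈ range q, μ (r + a * m)) * g r := by
  induction q with
  | zero => simp
  | succ q ih => rw [mul_add_one, ← add_assoc, hg, ih, prod_range_succ]; ring

def stepRecurrence.extend (ha : 0 < a) (v : Fin a → K) (j : ℕ) : K :=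
  (∏ m ∈ range (j / a), μ (j % a + a * m)) * v ⟨j % a, Nat.mod_lt j ha⟩

theorem stepRecurrence.extend_mem (ha : 0 < a) (v : Fin a → K) :
    extend (μ := μ) ha v ∈ stepRecurrence K a μ := by
  intro j
  simp only [extend, Nat.add_mod_right, Nat.add_div_right j ha, prod_range_succ,
    Nat.mod_add_div]
  ring

theorem stepRecurrence.extend_of_lt (ha : 0 < a) (v : Fin a → K) (k : Fin a) :
    extend (μ := μ) ha v k = v k := by
  simp [extend, Nat.mod_eq_of_lt k.isLt, Nat.div_eq_of_lt k.isLt]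

theorem rank_stepRecurrence [StrongRankCondition K] (ha : 0 < a) :
    Module.rank K (stepRecurrence K a μ) = a := by
  let restrict : stepRecurrence K a μ →ₗ[K] (Fin a → K) :=
    { toFun := fun g k => g.1 k
      map_add' := fun _ _ => rfl
      map_smul' := fun _ _ => rfl }
  have hinj : Function.Injective restrict := by
    rw [injective_iff_map_eq_zero]
    intro g hg
    ext j
    have hr : (g : ℕ → K) (j % a) = 0 := congrFun hg ⟨j % a, Nat.mod_lt j ha⟩
    rw [← Nat.mod_add_div j a, stepRecurrence.apply_add_mul g.2, hr, mul_zero]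
    rfl
  have hsurj : Function.Surjective restrict := fun v =>
    ⟨⟨_, stepRecurrence.extend_mem ha v⟩, funext (stepRecurrence.extend_of_lt ha v)⟩
  rw [(LinearEquiv.ofBijective restrict ⟨hinj, hsurj⟩).rank_eq, rank_fin_fun]

end StepRecurrence

section ColumnCoefficients

variable (a b : ℕ) (β ε : ℂ)

def colProd (i j : ℕ) : ℂ :=
  ∏ k ∈ range i, (β - ((a * k + b * j : ℕ) : ℂ))

/-- `f_{(i,j)} = colCoeff i j · f_{(0,j)}` for every solution of `E_p f = 0`. -/
def colCoeff (i j : ℕ) : ℂ :=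
  colProd a b β i j / (((a : ℂ) * ε) ^ i * i !)

/-- The ratio `f_{(0,j+a)} / f_{(0,j)}` forced by `P f = 0`. -/
def colRatio (j : ℕ) : ℂ :=
  j ! * b ! * colCoeff a b β ε b j / (j + a)!

theorem colCoeff_zero (j : ℕ) : colCoeff a b β ε 0 j = 1 := by
  simp [colCoeff, colProd]

variable {a ε}

theorem colCoeff_succ (ha : a ≠ 0) (hε : ε ≠ 0) (i j : ℕ) :
    (a : ℂ) * ε * ((i : ℂ) + 1) * colCoeff a b β ε (i + 1) j
      = (β - ((a * i + b * j : ℕ) : ℂ)) * colCoeff a b β ε i j := by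
  have : (a : ℂ) ≠ 0 := Nat.cast_ne_zero.mpr ha
  simp only [colCoeff, colProd, prod_range_succ, pow_succ, Nat.factorial_succ]
  push_cast
  field_simp

theorem colProd_add (i j : ℕ) :
    colProd a b β (b + i) j = colProd a b β b j * colProd a b β i (j + a) := by
  rw [colProd, prod_range_add]
  congr 1
  refine prod_congr rfl fun k _ => ?_
  rw [show a * (b + k) + b * j = a * k + b * (j + a) by ring]

theorem factorial_mul_colCoeff_add (ha : a ≠ 0) (hε : ε ≠ 0) (i j : ℕ) :
    ((i + b)! : ℂ) * colCoeff a b β ε (i + b) j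
      = i ! * b ! * colCoeff a b β ε b j * colCoeff a b β ε i (j + a) := by
  have : (a : ℂ) ≠ 0 := Nat.cast_ne_zero.mpr ha
  have := Nat.cast_ne_zero (R := ℂ).mpr (Nat.factorial_ne_zero (b + i))
  have := Nat.cast_ne_zero (R := ℂ).mpr (Nat.factorial_ne_zero i)
  have := Nat.cast_ne_zero (R := ℂ).mpr (Nat.factorial_ne_zero b)
  simp only [colCoeff, add_comm i b, colProd_add, pow_add]
  field_simp

end ColumnCoefficients

theorem eq_of_co_eq {f g : M2} (h : ∀ i j, co f i j = co g i j) : f = g := by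
  ext d
  have hd : d = Finsupp.single 0 (d 0) + Finsupp.single 1 (d 1) := by
    ext x; fin_cases x <;> simp
  rw [hd]
  exact h _ _

theorem cast_factorial_add_div_factorial (i n : ℕ) :
    (((i + n)! / i ! : ℕ) : ℂ) = (i + n)! / i ! :=
  Nat.cast_div (Nat.factorial_dvd_factorial (Nat.le_add_right i n))
    (Nat.cast_ne_zero.mpr (Nat.factorial_ne_zero i))

def ofColumn (a b : ℕ) (β ε : ℂ) (g : ℕ → ℂ) : M2 :=
  fun d => colCoeff a b β ε (d 0) (d 1) * g (d 1)

theorem co_ofColumn (a b : ℕ) (β ε : ℂ) (g : ℕ → ℂ) (i j : ℕ) :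
    co (ofColumn a b β ε g) i j = colCoeff a b β ε i j * g j := by
  simp [co, ofColumn, MvPowerSeries.coeff_apply]

section Solutions

variable {a b : ℕ} {β ε : ℂ}

theorem SolP.co_eq_colCoeff_mul (ha : a ≠ 0) (hε : ε ≠ 0) {f : M2} (hf : f ∈ SolP a b β ε)
    (i j : ℕ) : co f i j = colCoeff a b β ε i j * co f 0 j := by
  induction i with
  | zero => rw [colCoeff_zero, one_mul]
  | succ i ih =>
    have hE := hf.2 i j
    have hi : (a : ℂ) * ε * ((i : ℂ) + 1) ≠ 0 := by
      have : (a : ℂ) ≠ 0 := Nat.cast_ne_zero.mpr ha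
      have : (i : ℂ) + 1 ≠ 0 := Nat.cast_add_one_ne_zero i
      positivity
    apply mul_left_cancel₀ hi
    rw [Epco, ih] at hE
    linear_combination hE - co f 0 j * colCoeff_succ b β ha hε i j

theorem SolP.column_mem (ha : a ≠ 0) (hε : ε ≠ 0) {f : M2} (hf : f ∈ SolP a b β ε) :
    (fun j => co f 0 j) ∈ stepRecurrence ℂ a (colRatio a b β ε) := by
  intro j
  have hP := hf.1 0 j
  rw [Pco, cast_factorial_add_div_factorial, cast_factorial_add_div_factorial,
    co_eq_colCoeff_mul ha hε hf] at hP
  simp only [zero_add, Nat.factorial_zero, Nat.cast_one, div_one] at hP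
  have hja := Nat.cast_ne_zero (R := ℂ).mpr (Nat.factorial_ne_zero (j + a))
  have hj := Nat.cast_ne_zero (R := ℂ).mpr (Nat.factorial_ne_zero j)
  simp only [colRatio]
  rw [div_mul_eq_mul_div, eq_div_iff hja]
  field_simp at hP
  linear_combination -hP

theorem ofColumn_mem (ha : a ≠ 0) (hε : ε ≠ 0) {g : ℕ → ℂ}
    (hg : g ∈ stepRecurrence ℂ a (colRatio a b β ε)) :
    ofColumn a b β ε g ∈ SolP a b β ε := by
  refine ⟨fun i j => ?_, fun i j => ?_⟩
  · have hja := Nat.cast_ne_zero (R := ℂ).mpr (Nat.factorial_ne_zero (j + a))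
    have hj := Nat.cast_ne_zero (R := ℂ).mpr (Nat.factorial_ne_zero j)
    have hi := Nat.cast_ne_zero (R := ℂ).mpr (Nat.factorial_ne_zero i)
    rw [Pco, cast_factorial_add_div_factorial, cast_factorial_add_div_factorial,
      co_ofColumn, co_ofColumn, hg j, colRatio]
    field_simp
    linear_combination g j * factorial_mul_colCoeff_add b β ha hε i j
  · rw [Epco, co_ofColumn, co_ofColumn]
    linear_combination g j * colCoeff_succ b β ha hε i j

def solPEquivColumn (ha : a ≠ 0) (hε : ε ≠ 0) :
    SolP a b β ε ≃ₗ[ℂ] stepRecurrence ℂ a (colRatio a b β ε) where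
  toFun f := ⟨fun j => co f 0 j, SolP.column_mem ha hε f.2⟩
  map_add' f g := by ext j; exact co_add f g 0 j
  map_smul' c f := by ext j; exact co_smul c f 0 j
  invFun g := ⟨ofColumn a b β ε g, ofColumn_mem ha hε g.2⟩
  left_inv f := Subtype.ext <| eq_of_co_eq fun i j => by
    rw [co_ofColumn, SolP.co_eq_colCoeff_mul ha hε f.2]
  right_inv g := by ext j; simp [co_ofColumn, colCoeff_zero]

end Solutions

theorem dim_formal_solutions_at_p_general
    (a b : ℕ) (ha : 0 < a)
    (β : ℂ) (ε : ℂ) (hε : ε ≠ 0) :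
    Module.rank ℂ (SolP a b β ε) = a := by
  rw [(solPEquivColumn ha.ne' hε).rank_eq, rank_stepRecurrence ha]

/-- The space of formal power series solutions of the hypergeometric system at the point
`p = (ε,0)` with `ε ≠ 0` has dimension `a`. -/
theorem dim_formal_solutions_at_p
    (a b : ℕ) (hab : Nat.Coprime a b) (ha : 0 < a) (haltb : a < b)
    (β : ℂ) (ε : ℂ) (hε : ε ≠ 0) :
    Module.rank ℂ (SolP a b β ε) = a :=
  dim_formal_solutions_at_p_general a b ha β ε hε

end
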